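/- arXiv:math/0405559 — 3 statements merged into one kernel-verified Lean document; each statement's English description precedes it below -/
import Mathlib

section
/- The Bäcklund transformations s₂ and s₃ of the sixth Painlevé system satisfy the braid relation (s₂s₃)³ = 1; in particular s₂s₃s₂ = s₃s₂s₃ as maps on the variables (α₀,...,α₄,q,p). -/
/-- The variables `(α₀,α₁,α₂,α₃,α₄,t,q,p)` of the sixth Painlevé system. -/
structure PVIVars where
  a0 : ℂ
  a1 : ℂ
  a2 : ℂ
  a3 : ℂ
  a4 : ℂ
  t : ℂ
  q : ℂ
  p : ℂ

/-- The Bäcklund transformation `s₂` of `P_VI`. -/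
noncomputable def s2VI (x : PVIVars) : PVIVars :=
  ⟨x.a0 + x.a2, x.a1 + x.a2, -x.a2, x.a3 + x.a2, x.a4 + x.a2, x.t,
    x.q + x.a2 / x.p, x.p⟩

/-- The Bäcklund transformation `s₃` of `P_VI`. -/
noncomputable def s3VI (x : PVIVars) : PVIVars :=
  ⟨x.a0, x.a1, x.a2 + x.a3, -x.a3, x.a4, x.t, x.q, x.p - x.a3 / (x.q - 1)⟩

lemma s3s3 (y : PVIVars) (h : y.q - 1 ≠ 0) : s3VI (s3VI y) = y := by
  obtain ⟨a0, a1, a2, a3, a4, t, q, p⟩ := y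
  simp only [s3VI, PVIVars.mk.injEq] at h ⊢
  refine ⟨trivial, trivial, by first | trivial | ring, by first | trivial | ring, trivial, trivial, trivial, ?_⟩
  field_simp
  ring

lemma s2s2 (y : PVIVars) (h : y.p ≠ 0) : s2VI (s2VI y) = y := by
  obtain ⟨a0, a1, a2, a3, a4, t, q, p⟩ := y
  simp only [s2VI, PVIVars.mk.injEq] at h ⊢
  refine ⟨by first | trivial | ring, by first | trivial | ring, by first | trivial | ring, by first | trivial | ring, by first | trivial | ring, trivial, ?_, trivial⟩
  field_simp
  ring

set_option maxHeartbeats 1000000 in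
lemma braidVI (x : PVIVars)
    (hp : x.p ≠ 0) (hq : x.q - 1 ≠ 0)
    (h1 : (s2VI x).q - 1 ≠ 0) (h2 : (s3VI (s2VI x)).p ≠ 0)
    (h3 : (s3VI x).p ≠ 0) (h4 : (s2VI (s3VI x)).q - 1 ≠ 0) :
    s2VI (s3VI (s2VI x)) = s3VI (s2VI (s3VI x)) := by
  obtain ⟨a0, a1, a2, a3, a4, t, q, p⟩ := x
  simp only [s2VI, s3VI] at hp hq h1 h2 h3 h4 ⊢
  simp only [PVIVars.mk.injEq]
  field_simp at h1 h3
  field_simp [h1] at h2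
  field_simp [h3] at h4
  have hA : q * p - p + a2 ≠ 0 := by
    intro h; apply h1; rw [div_eq_zero_iff]; left; linear_combination h
  have hB : q * p - p - a3 ≠ 0 := by
    intro h; apply h3; rw [div_eq_zero_iff]; left; linear_combination h
  have hA' : -p + p * q + a2 ≠ 0 := by
    intro h; exact hA (by linear_combination h)
  have hB' : -p + p * q - a3 ≠ 0 := by
    intro h; exact hB (by linear_combination h)
  have e1 : q + a2 / p - 1 = (q * p - p + a2) / p := by
    rw [eq_div_iff hp, sub_mul, add_mul, div_mul_cancel₀ _ hp]; ring
  have e2 : p - a3 / (q - 1) = (q * p - p - a3) / (q - 1) := by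
    rw [eq_div_iff hq, sub_mul, div_mul_cancel₀ _ hq]; ring
  have e3 : p - (a3 + a2) / ((q * p - p + a2) / p) = p * (q * p - p - a3) / (q * p - p + a2) := by
    rw [div_div_eq_mul_div, eq_div_iff hA, sub_mul, div_mul_cancel₀ _ hA]; ring
  have e4 : q + (a2 + a3) / ((q * p - p - a3) / (q - 1)) - 1
      = (q - 1) * (q * p - p + a2) / (q * p - p - a3) := by
    rw [div_div_eq_mul_div, eq_div_iff hB, sub_mul, add_mul, div_mul_cancel₀ _ hB]; ring
  refine ⟨by first | trivial | ring, by first | trivial | ring, by first | trivial | ring, by first | trivial | ring, by first | trivial | ring, trivial, ?_, ?_⟩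
  · rw [show -a2 + (a3 + a2) = a3 by ring, e1, e3, e2]
    simp only [div_div_eq_mul_div]
    rw [add_assoc, div_add_div _ _ hp (mul_ne_zero hp hB), add_right_inj,
      div_eq_div_iff (mul_ne_zero hp (mul_ne_zero hp hB)) hB]
    ring
  · rw [show -a3 + (a2 + a3) = a2 by ring, e1, e3, e2, e4]
    simp only [div_div_eq_mul_div]
    rw [div_sub_div _ _ hq (mul_ne_zero hq hA),
      div_eq_div_iff hA (mul_ne_zero hq (mul_ne_zero hq hA))]
    ring

/-- `s₂` and `s₃` satisfy the braid relation `(s₂s₃)³ = 1`; in particular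
`s₂s₃s₂ = s₃s₂s₃`, wherever all the intermediate expressions are defined. -/
theorem stmt_2 (x : PVIVars)
    (hp : x.p ≠ 0) (hq : x.q - 1 ≠ 0)
    (h1 : (s2VI x).q - 1 ≠ 0) (h2 : (s3VI (s2VI x)).p ≠ 0)
    (h3 : (s3VI x).p ≠ 0) (h4 : (s2VI (s3VI x)).q - 1 ≠ 0)
    (h5 : (s3VI (s2VI (s3VI x))).p ≠ 0)
    (h6 : (s2VI (s3VI (s2VI (s3VI x)))).q - 1 ≠ 0)
    (h7 : (s3VI (s2VI (s3VI (s2VI (s3VI x))))).p ≠ 0) :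
    s2VI (s3VI (s2VI x)) = s3VI (s2VI (s3VI x)) ∧
    s2VI (s3VI (s2VI (s3VI (s2VI (s3VI x))))) = x := by
  have hb := braidVI x hp hq h1 h2 h3 h4
  refine ⟨hb, ?_⟩
  have hq3 : (s3VI x).q - 1 ≠ 0 := hq
  have h33 : s3VI (s3VI x) = x := s3s3 x hq
  have hb2 : s2VI (s3VI (s2VI (s3VI x))) = s3VI (s2VI (s3VI (s3VI x))) := by
    apply braidVI (s3VI x) h3 hq3 h4 h5
    · rw [h33]; exact hp
    · rw [h33]; exact h1
  rw [hb2, h33, s3s3 (s2VI x) h1, s2s2 x hp]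
end

section
/- In W_III, the transformation S₀ := (s₂s₁)² equals (s₁s₂)² on the parameters (α₀,α₁,α₂), and with α₀ = A₁, α₁ = ε⁻³/4, α₂ = A₀ - ε⁻³/2, it acts by S₀(A₀) = -A₀, S₀(A₁) = A₁ + 2A₀, and S₀(ε) = -ε. -/
/-- The parameters `(α₀,α₁,α₂)` of the third Painlevé system. -/
structure PIIIParams where
  a0 : ℂ
  a1 : ℂ
  a2 : ℂ

/-- `s₁`: `α₁ ↦ -α₁`, `α₀ ↦ α₀+2α₁`, `α₂ ↦ α₂+2α₁`. -/
def s1III (a : PIIIParams) : PIIIParams :=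
  ⟨a.a0 + 2 * a.a1, -a.a1, a.a2 + 2 * a.a1⟩

/-- `s₂`: `α₂ ↦ -α₂`, `α₁ ↦ α₁+α₂`, `α₀ ↦ α₀`. -/
def s2III (a : PIIIParams) : PIIIParams := ⟨a.a0, a.a1 + a.a2, -a.a2⟩

/-- In `W_III`, `S₀ := (s₂s₁)²` equals `(s₁s₂)²` on the parameters, and with
`A₀ := α₂ + 2α₁`, `A₁ := α₀`, `ε³ := 1/(4α₁)`, it acts by `S₀(A₀) = -A₀`,
`S₀(A₁) = A₁ + 2A₀`, and `S₀(ε³) = -ε³` (i.e. `S₀(ε) = -ε`). -/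
theorem stmt_14 (a : PIIIParams) (h1 : a.a1 ≠ 0) :
    s2III (s1III (s2III (s1III a))) = s1III (s2III (s1III (s2III a))) ∧
    (s2III (s1III (s2III (s1III a)))).a2 + 2 * (s2III (s1III (s2III (s1III a)))).a1 =
      -(a.a2 + 2 * a.a1) ∧
    (s2III (s1III (s2III (s1III a)))).a0 = a.a0 + 2 * (a.a2 + 2 * a.a1) ∧
    1 / (4 * (s2III (s1III (s2III (s1III a)))).a1) = -(1 / (4 * a.a1)) := by
  refine ⟨?_, ?_, ?_, ?_⟩
  · simp only [s1III, s2III, PIIIParams.mk.injEq]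
    refine ⟨by ring, by ring, by ring⟩
  · simp only [s1III, s2III]; ring
  · simp only [s1III, s2III]; ring
  · simp only [s1III, s2III]
    rw [show -(-a.a1 + (a.a2 + 2 * a.a1)) + (-(a.a2 + 2 * a.a1) + 2 * (-a.a1 + (a.a2 + 2 * a.a1))) = -a.a1 by ring]
    rw [mul_neg, one_div, one_div, neg_inv]
end

section
/- Under the degeneration substitutions t = -ε⁻³(1-ε⁴T)/√2, q = ε⁻³(1+2ε²Q)/√2, p = εP/√2, α₂ = A₁, the Hamiltonian H_IV(q,p,t,α) = qp(2p-q-2t) - 2α₁p - α₂q, rescaled by ε/√2, converges as ε → 0 to H_II(Q,P,T,A) = P²/2 - (Q² + T/2)P - A₁Q, up to terms independent of Q and P; precisely, (ε/√2)H_IV = P²/2 - (Q²+T/2)P - A₁Q + c(ε,T,A) + O(ε) where c is independent of Q,P. -/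
/-!
The factors `1/√2` only rescale `H_IV`: for `s² = 2`, `(ε/s)·H_IV(α₁, α₂, q/s, p/s, t/s)` is
`(ε/4)·H_IV(2α₁, 2α₂, q, p, t)`. After that the degeneration is a Laurent-polynomial identity in `ε`:
the `ε⁻⁴P` contributions of the cubic term and of `α₁ = ε⁻⁶/4` cancel, as do the `ε⁻²QP`
contributions of the cubic term, leaving `H_II`, the `(Q,P)`-free term `-A₁/(2ε²)` and the
remainder `ε²QP(P - T)`.
-/

noncomputable def painleveIVHamiltonian (α₁ α₂ q p t : ℝ) : ℝ :=
  q * p * (2 * p - q - 2 * t) - 2 * α₁ * p - α₂ * q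

noncomputable def painleveIIHamiltonian (A₁ Q P T : ℝ) : ℝ :=
  P ^ 2 / 2 - (Q ^ 2 + T / 2) * P - A₁ * Q

theorem div_mul_painleveIVHamiltonian_div {s : ℝ} (hs : s ^ 2 = 2) (ε α₁ α₂ q p t : ℝ) :
    ε / s * painleveIVHamiltonian α₁ α₂ (q / s) (p / s) (t / s) =
      ε / 4 * painleveIVHamiltonian (2 * α₁) (2 * α₂) q p t := by
  have hs₀ : s ≠ 0 := by
    rintro rfl
    norm_num at hs
  unfold painleveIVHamiltonian
  field_simp
  rw [show s ^ 4 = (s ^ 2) ^ 2 by ring, hs]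
  ring

theorem painleveIVHamiltonian_degeneration {ε : ℝ} (hε : ε ≠ 0) (T Q P A₁ : ℝ) :
    ε / 4 * painleveIVHamiltonian ((ε ^ 6)⁻¹ / 2) (2 * A₁) ((ε ^ 3)⁻¹ * (1 + 2 * ε ^ 2 * Q))
        (ε * P) (-(ε ^ 3)⁻¹ * (1 - ε ^ 4 * T)) =
      painleveIIHamiltonian A₁ Q P T - A₁ / (2 * ε ^ 2) + ε ^ 2 * Q * P * (P - T) := by
  unfold painleveIVHamiltonian painleveIIHamiltonian
  field_simp
  ring

/-- Under the degeneration substitutions `t = -ε⁻³(1-ε⁴T)/√2`,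
`q = ε⁻³(1+2ε²Q)/√2`, `p = εP/√2`, `α₁ = ε⁻⁶/4`, `α₂ = A₁`, the rescaled
Hamiltonian `(ε/√2)·H_IV` equals
`H_II(Q,P,T,A₁) = P²/2 - (Q²+T/2)P - A₁Q` plus a term `c(ε,T,A₀,A₁)`
independent of `Q,P` plus a term `ε·R` which is `O(ε)` as `ε → 0`. -/
theorem stmt_19 :
    ∃ (c : ℝ → ℝ → ℝ → ℝ → ℝ) (R : ℝ → ℝ → ℝ → ℝ → ℝ → ℝ → ℝ),
      (∀ T Q P A₀ A₁ : ℝ, ContinuousAt (fun ε => R ε T Q P A₀ A₁) 0) ∧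
      ∀ ε T Q P A₀ A₁ : ℝ, ε ≠ 0 → A₀ + A₁ = 1 →
        (ε / Real.sqrt 2) *
          (((ε ^ 3)⁻¹ * (1 + 2 * ε ^ 2 * Q) / Real.sqrt 2) *
              (ε * P / Real.sqrt 2) *
              (2 * (ε * P / Real.sqrt 2) -
                (ε ^ 3)⁻¹ * (1 + 2 * ε ^ 2 * Q) / Real.sqrt 2 -
                2 * (-(ε ^ 3)⁻¹ * (1 - ε ^ 4 * T) / Real.sqrt 2)) -
            2 * ((ε ^ 6)⁻¹ / 4) * (ε * P / Real.sqrt 2) -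
            A₁ * ((ε ^ 3)⁻¹ * (1 + 2 * ε ^ 2 * Q) / Real.sqrt 2)) =
          P ^ 2 / 2 - (Q ^ 2 + T / 2) * P - A₁ * Q +
            c ε T A₀ A₁ + ε * R ε T Q P A₀ A₁ := by
  refine ⟨fun ε _ _ A₁ => -A₁ / (2 * ε ^ 2), fun ε T Q P _ _ => ε * Q * P * (P - T),
    fun _ _ _ _ _ => by fun_prop, fun ε T Q P _ A₁ hε _ => ?_⟩
  calc _ = ε / 4 * painleveIVHamiltonian (2 * ((ε ^ 6)⁻¹ / 4)) (2 * A₁)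
          ((ε ^ 3)⁻¹ * (1 + 2 * ε ^ 2 * Q)) (ε * P) (-(ε ^ 3)⁻¹ * (1 - ε ^ 4 * T)) :=
        div_mul_painleveIVHamiltonian_div (Real.sq_sqrt zero_le_two) ..
    _ = painleveIIHamiltonian A₁ Q P T - A₁ / (2 * ε ^ 2) + ε ^ 2 * Q * P * (P - T) := by
        rw [show 2 * ((ε ^ 6)⁻¹ / 4) = (ε ^ 6)⁻¹ / 2 by ring]
        exact painleveIVHamiltonian_degeneration hε T Q P A₁
    _ = _ := by
        unfold painleveIIHamiltonian
        ring
end
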